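/- arXiv:2312.10137 — 2 statements merged into one kernel-verified Lean document; each statement's English description precedes it below -/
import Mathlib

section
/- Let N = (V, E, c) be a nesting balanced network with boundary vertices ∂V ⊆ V, and let I, J, K ⊆ ∂V be pairwise disjoint. Then the cycle-flow entropy satisfies strong subadditivity: S(I ∪ K) + S(J ∪ K) ≥ S(K) + S(I ∪ J ∪ K). -/
open scoped Classical

/-- An edge cycle: a nonempty cyclically ordered sequence of distinct directed
edges (each a source-target pair) with the target of each edge equal to the
source of the next (cyclically). -/
structure EdgeCycle (V : Type*) where
  n : ℕ
  npos : 0 < n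
  edge : Fin n → V × V
  inj : Function.Injective edge
  chain : ∀ i : Fin n, (edge i).2 = (edge ⟨(i.val + 1) % n, Nat.mod_lt _ npos⟩).1

/-- Membership of a directed edge in an edge cycle. -/
def EdgeCycle.Mem {V : Type*} (C : EdgeCycle V) (e : V × V) : Prop :=
  ∃ i, C.edge i = e

/-- The cycle visits a vertex of `S`: some edge of the cycle has its target in `S`. -/
def EdgeCycle.Visits {V : Type*} (C : EdgeCycle V) (S : Finset V) : Prop :=
  ∃ i, (C.edge i).2 ∈ S

/-- A simple cycle flow: an edge cycle together with a nonnegative flux. -/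
structure CycleFlow (V : Type*) where
  cyc : EdgeCycle V
  flux : ℝ
  flux_nonneg : 0 ≤ flux

/-- The total load that a finite family of simple cycle flows places on the
directed edge `(u, v)`. -/
noncomputable def edgeLoad {V : Type*} (F : List (CycleFlow V)) (u v : V) : ℝ :=
  (F.map (fun C => if C.cyc.Mem (u, v) then C.flux else 0)).sum

/-- A finite family of simple cycle flows is a multi-cycle flow on the network
with capacity function `c` if on every edge the total load is at most the capacity. -/
def Feasible {V : Type*} (c : V → V → ℝ) (F : List (CycleFlow V)) : Prop :=
  ∀ u v, edgeLoad F u v ≤ c u v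

/-- The flux of a multi-cycle flow between two (disjoint) vertex sets `I` and `J`:
the sum of the fluxes of those simple cycle flows visiting both a vertex of `I`
and a vertex of `J`. -/
noncomputable def mflux {V : Type*} (F : List (CycleFlow V)) (I J : Finset V) : ℝ :=
  (F.map (fun C => if C.cyc.Visits I ∧ C.cyc.Visits J then C.flux else 0)).sum

/-- The cycle-flow entropy of a subset `I` of the boundary vertices `bdry`:
the maximal flux between `I` and its boundary complement over all
multi-cycle flows. -/
noncomputable def entropy {V : Type*} (c : V → V → ℝ) (bdry I : Finset V) : ℝ :=
  sSup { x | ∃ F : List (CycleFlow V), Feasible c F ∧ mflux F I (bdry \ I) = x }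

/-- A network is balanced if at every vertex the total capacity of ingoing edges
equals the total capacity of outgoing edges. -/
def BalancedNet {V : Type*} [Fintype V] (c : V → V → ℝ) : Prop :=
  ∀ v : V, (∑ u, c u v) = ∑ u, c v u

/-- The residual capacity function of a network `c` with respect to a
multi-cycle flow `F`. -/
noncomputable def resid {V : Type*} (c : V → V → ℝ) (F : List (CycleFlow V)) : V → V → ℝ :=
  fun u v => c u v - edgeLoad F u v

/-- `F'` is a multi-cycle subflow of `F`: same edge cycles, smaller fluxes. -/
def Subflow {V : Type*} (F' F : List (CycleFlow V)) : Prop :=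
  List.Forall₂ (fun C' C => C'.cyc = C.cyc ∧ C'.flux ≤ C.flux) F' F

/-- The nesting property: for every pair of disjoint boundary subsets `I`, `J`
there is a single multi-cycle flow simultaneously maximizing the flux through
`I` and through `I ∪ J`. -/
def Nesting {V : Type*} (c : V → V → ℝ) (bdry : Finset V) : Prop :=
  ∀ I J : Finset V, I ⊆ bdry → J ⊆ bdry → Disjoint I J →
    ∃ F : List (CycleFlow V), Feasible c F ∧
      mflux F I (bdry \ I) = entropy c bdry I ∧
      mflux F (I ∪ J) (bdry \ (I ∪ J)) = entropy c bdry (I ∪ J)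

/-!
For a single cycle flow, the indicator of "visits both `X` and `bdry \ X`" is the cut function
of the set of boundary vertices the cycle visits, hence submodular in `X`. Summing over a
multi-cycle flow, its flux is submodular as well. The nesting property supplies one flow that is
optimal for `X ∩ Y` and `X ∪ Y` at once, while any flow is bounded by `S X` and `S Y`; this gives
`S (X ∩ Y) + S (X ∪ Y) ≤ S X + S Y`, and strong subadditivity is the case `X = I ∪ K`,
`Y = J ∪ K`.
-/

section CycleFlux

variable {V : Type*}

namespace EdgeCycle

theorem Visits.mono {C : EdgeCycle V} {S T : Finset V} (h : C.Visits S) (hST : S ⊆ T) :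
    C.Visits T :=
  let ⟨i, hi⟩ := h
  ⟨i, hST hi⟩

theorem visits_union (C : EdgeCycle V) (S T : Finset V) :
    C.Visits (S ∪ T) ↔ C.Visits S ∨ C.Visits T := by
  simp only [Visits, Finset.mem_union, exists_or]

end EdgeCycle

theorem ite_add_ite_le_ite_add_ite {A B P Q : Prop} [Decidable A] [Decidable B] [Decidable P]
    [Decidable Q] {f : ℝ} (hf : 0 ≤ f) (hboth : A ∧ B → P ∧ Q) (hone : A ∨ B → P ∨ Q) :
    (if A then f else 0) + (if B then f else 0) ≤ (if P then f else 0) + (if Q then f else 0) := by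
  split_ifs <;> first | linarith | tauto

namespace CycleFlow

theorem flux_le_sum_load [Fintype V] (C : CycleFlow V) :
    C.flux ≤ ∑ u, ∑ v, if C.cyc.Mem (u, v) then C.flux else 0 := by
  obtain ⟨⟨u, v⟩, he⟩ : ∃ e, C.cyc.edge ⟨0, C.cyc.npos⟩ = e := ⟨_, rfl⟩
  have hload_nonneg (u v : V) : 0 ≤ if C.cyc.Mem (u, v) then C.flux else 0 := by
    split_ifs
    exacts [C.flux_nonneg, le_rfl]
  calc C.flux = if C.cyc.Mem (u, v) then C.flux else 0 := by rw [if_pos ⟨_, he⟩]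
    _ ≤ ∑ v', if C.cyc.Mem (u, v') then C.flux else 0 :=
      Finset.single_le_sum (fun v' _ => hload_nonneg u v') (Finset.mem_univ v)
    _ ≤ ∑ u', ∑ v', if C.cyc.Mem (u', v') then C.flux else 0 :=
      Finset.single_le_sum (fun u' _ => Finset.sum_nonneg fun v' _ => hload_nonneg u' v')
        (Finset.mem_univ u)

noncomputable def cutFlux (C : CycleFlow V) (bdry X : Finset V) : ℝ :=
  if C.cyc.Visits X ∧ C.cyc.Visits (bdry \ X) then C.flux else 0

theorem cutFlux_inter_add_cutFlux_union_le (C : CycleFlow V) (bdry X Y : Finset V) :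
    C.cutFlux bdry (X ∩ Y) + C.cutFlux bdry (X ∪ Y) ≤ C.cutFlux bdry X + C.cutFlux bdry Y := by
  have hX : C.cyc.Visits (X ∩ Y) → C.cyc.Visits X := (·.mono Finset.inter_subset_left)
  have hY : C.cyc.Visits (X ∩ Y) → C.cyc.Visits Y := (·.mono Finset.inter_subset_right)
  have hXc : C.cyc.Visits (bdry \ (X ∪ Y)) → C.cyc.Visits (bdry \ X) :=
    (·.mono (Finset.sdiff_subset_sdiff le_rfl Finset.subset_union_left))
  have hYc : C.cyc.Visits (bdry \ (X ∪ Y)) → C.cyc.Visits (bdry \ Y) :=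
    (·.mono (Finset.sdiff_subset_sdiff le_rfl Finset.subset_union_right))
  have hunion := C.cyc.visits_union X Y
  have hinterc := C.cyc.visits_union (bdry \ X) (bdry \ Y)
  rw [← Finset.sdiff_inter_distrib_right] at hinterc
  exact ite_add_ite_le_ite_add_ite C.flux_nonneg (by tauto) (by tauto)

end CycleFlow

theorem mflux_sdiff_eq_sum_cutFlux (F : List (CycleFlow V)) (bdry X : Finset V) :
    mflux F X (bdry \ X) = (F.map (·.cutFlux bdry X)).sum :=
  rfl

theorem mflux_inter_add_mflux_union_le (F : List (CycleFlow V)) (bdry X Y : Finset V) :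
    mflux F (X ∩ Y) (bdry \ (X ∩ Y)) + mflux F (X ∪ Y) (bdry \ (X ∪ Y)) ≤
      mflux F X (bdry \ X) + mflux F Y (bdry \ Y) := by
  simp only [mflux_sdiff_eq_sum_cutFlux, ← List.sum_map_add]
  exact List.sum_le_sum fun C _ => C.cutFlux_inter_add_cutFlux_union_le bdry X Y

theorem mflux_le_sum_flux (F : List (CycleFlow V)) (I J : Finset V) :
    mflux F I J ≤ (F.map (·.flux)).sum := by
  refine List.sum_le_sum fun C _ => ?_
  split_ifs
  exacts [le_rfl, C.flux_nonneg]

theorem sum_flux_le_sum_edgeLoad [Fintype V] (F : List (CycleFlow V)) :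
    (F.map (·.flux)).sum ≤ ∑ u, ∑ v, edgeLoad F u v := by
  induction F with
  | nil => simp [edgeLoad]
  | cons C F ih =>
    simp only [edgeLoad, List.map_cons, List.sum_cons, Finset.sum_add_distrib] at ih ⊢
    linarith [C.flux_le_sum_load]

theorem Feasible.mflux_le_sum_capacity [Fintype V] {c : V → V → ℝ} {F : List (CycleFlow V)}
    (hF : Feasible c F) (I J : Finset V) : mflux F I J ≤ ∑ u, ∑ v, c u v :=
  calc mflux F I J ≤ (F.map (·.flux)).sum := mflux_le_sum_flux F I J
    _ ≤ ∑ u, ∑ v, edgeLoad F u v := sum_flux_le_sum_edgeLoad F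
    _ ≤ ∑ u, ∑ v, c u v := Finset.sum_le_sum fun u _ => Finset.sum_le_sum fun v _ => hF u v

theorem Feasible.mflux_le_entropy [Fintype V] {c : V → V → ℝ} {F : List (CycleFlow V)}
    (hF : Feasible c F) (bdry X : Finset V) : mflux F X (bdry \ X) ≤ entropy c bdry X :=
  le_csSup ⟨_, by rintro _ ⟨F', hF', rfl⟩; exact hF'.mflux_le_sum_capacity _ _⟩ ⟨F, hF, rfl⟩

theorem Nesting.entropy_inter_add_entropy_union_le [Fintype V]
    {c : V → V → ℝ} {bdry : Finset V} (hnest : Nesting c bdry) {X Y : Finset V}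
    (hX : X ⊆ bdry) (hY : Y ⊆ bdry) :
    entropy c bdry (X ∩ Y) + entropy c bdry (X ∪ Y) ≤ entropy c bdry X + entropy c bdry Y := by
  have hXY : X ∪ Y ⊆ bdry := Finset.union_subset hX hY
  obtain ⟨F, hF, h_inter, h_union⟩ := hnest (X ∩ Y) ((X ∪ Y) \ (X ∩ Y))
    (Finset.inter_subset_left.trans hX) (Finset.sdiff_subset.trans hXY) Finset.disjoint_sdiff
  rw [Finset.union_sdiff_of_subset Finset.inter_subset_union] at h_union
  calc entropy c bdry (X ∩ Y) + entropy c bdry (X ∪ Y)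
      = mflux F (X ∩ Y) (bdry \ (X ∩ Y)) + mflux F (X ∪ Y) (bdry \ (X ∪ Y)) := by
        rw [h_inter, h_union]
    _ ≤ mflux F X (bdry \ X) + mflux F Y (bdry \ Y) := mflux_inter_add_mflux_union_le F bdry X Y
    _ ≤ entropy c bdry X + entropy c bdry Y :=
        add_le_add (hF.mflux_le_entropy bdry X) (hF.mflux_le_entropy bdry Y)

end CycleFlux

theorem stmt7_general {V : Type*} [Fintype V] [DecidableEq V] (c : V → V → ℝ)
    (bdry : Finset V)
    (hnest : Nesting c bdry) (I J K : Finset V)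
    (hI : I ⊆ bdry) (hJ : J ⊆ bdry) (hK : K ⊆ bdry)
    (hIJ : Disjoint I J) :
    entropy c bdry K + entropy c bdry (I ∪ J ∪ K) ≤
      entropy c bdry (I ∪ K) + entropy c bdry (J ∪ K) := by
  -- The unions in the statement use the `DecidableEq V` binder, those of the lemma the classical
  -- instance, so the sets are matched by extensionality.
  convert hnest.entropy_inter_add_entropy_union_le (Finset.union_subset hI hK)
    (Finset.union_subset hJ hK) using 3 <;> ext x
  · have hx : x ∈ I → x ∉ J := fun hxI => Finset.disjoint_left.mp hIJ hxI
    simp only [Finset.mem_inter, Finset.mem_union]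
    tauto
  · simp only [Finset.mem_union]
    tauto

/-- Strong subadditivity of the cycle-flow entropy on a nesting balanced network. -/
theorem stmt7 {V : Type*} [Fintype V] [DecidableEq V] (c : V → V → ℝ)
    (hc : ∀ u v, 0 ≤ c u v) (bdry : Finset V) (hbal : BalancedNet c)
    (hnest : Nesting c bdry) (I J K : Finset V)
    (hI : I ⊆ bdry) (hJ : J ⊆ bdry) (hK : K ⊆ bdry)
    (hIJ : Disjoint I J) (hIK : Disjoint I K) (hJK : Disjoint J K) :
    entropy c bdry K + entropy c bdry (I ∪ J ∪ K) ≤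
      entropy c bdry (I ∪ K) + entropy c bdry (J ∪ K) :=
  stmt7_general c bdry hnest I J K hI hJ hK hIJ
end

section
/- Let N = (V, E, c) be a symmetric directed network, i.e., for every edge u → v of capacity w there is an edge v → u of the same capacity w, with boundary vertices ∂V ⊆ V. Then for every I ⊆ ∂V the cycle-flow entropy equals the minimum edge cut separating I from ∂V ∖ I: S(I) = min over vertex subsets 𝒱 ⊆ V with 𝒱 ∩ ∂V = I of Σ_{e ∈ E : s(e) ∈ 𝒱, t(e) ∉ 𝒱} c(e). (In particular, the cycle-flow prescription on the directed symmetrization of an undirected weighted graph reproduces the min-cut entropies of the undirected graph model, so all holographic entropy vectors are realized by cycle flows.) -/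
open scoped Classical

/-!
Every simple cycle flow that visits both `I` and `∂V ∖ I` has to leave any `W` with
`W ∩ ∂V = I`, so the flux of a multi-cycle flow is bounded by the capacity of the cut `(W, Wᶜ)`.

Conversely, take a maximum flow from `I` to `J = ∂V ∖ I` (it exists by compactness). The vertices
reachable from `I` in its residual network form a cut whose capacity is the flow value, since an
augmenting path would increase the flow. Cancelling opposite flows on each pair of edges yields
`g u v + g v u ≤ c u v`; this is where the symmetry of `c` enters. Finally peel off simple paths
from `I` to `J` in the support of `g`: a path with bottleneck `ε` becomes the cycle flow "path,
then back along the reversed path" of flux `ε`, which puts no more load on the edges `u → v` and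
`v → u` than the peeled flow carried on them together.
-/

namespace EdgeCycle

variable {V : Type*}

theorem exists_edge_leaving (C : EdgeCycle V) (W : Finset V) (hin : C.Visits W)
    (hout : ∃ j, (C.edge j).2 ∉ W) : ∃ k, (C.edge k).1 ∈ W ∧ (C.edge k).2 ∉ W := by
  obtain ⟨i, hi⟩ := hin
  obtain ⟨j, hj⟩ := hout
  by_contra! hclosed
  let e (k : ℕ) := C.edge ⟨(i + k) % C.n, Nat.mod_lt _ C.npos⟩
  have he : ∀ k, (e k).2 ∈ W := by
    intro k
    induction k with
    | zero => simpa [e, Nat.mod_eq_of_lt i.isLt] using hi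
    | succ k ih =>
      rw [C.chain] at ih
      simpa [e, Nat.add_mod_mod, Nat.add_assoc] using hclosed _ ih
  have hj' : (i.val + (C.n + j - i)) % C.n = j := by
    rw [show i.val + (C.n + j - i) = j + C.n by omega, Nat.add_mod_right, Nat.mod_eq_of_lt j.isLt]
  exact hj (by simpa [e, hj'] using he (C.n + j - i))

end EdgeCycle

theorem exists_closed_of_not_reflTransGen {V : Type*} [Fintype V] (r : V → V → Prop)
    {I J : Finset V} (h : ∀ s ∈ I, ∀ t ∈ J, ¬ Relation.ReflTransGen r s t) :
    ∃ W : Finset V, I ⊆ W ∧ Disjoint J W ∧ ∀ u ∈ W, ∀ v ∉ W, ¬ r u v := by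
  refine ⟨Finset.univ.filter fun v => ∃ s ∈ I, Relation.ReflTransGen r s v, fun s hs => ?_,
    Finset.disjoint_left.mpr fun t ht hW => ?_, fun u hu v hv huv => hv ?_⟩
  · simpa using ⟨s, hs, Relation.ReflTransGen.refl⟩
  · obtain ⟨s, hs, hst⟩ := (Finset.mem_filter.mp hW).2
    exact h s hs t ht hst
  · obtain ⟨s, hs, hsu⟩ := (Finset.mem_filter.mp hu).2
    simpa using ⟨s, hs, hsu.tail huv⟩

section Cut

variable {V : Type*} [Fintype V] [DecidableEq V]

noncomputable def cutCapacity (c : V → V → ℝ) (W : Finset V) : ℝ :=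
  ∑ u ∈ W, ∑ v ∈ Wᶜ, c u v

theorem CycleFlow.flux_le_sum_load_leaving (C : CycleFlow V) {I J W : Finset V} (hIW : I ⊆ W)
    (hJW : Disjoint J W) :
    (if C.cyc.Visits I ∧ C.cyc.Visits J then C.flux else 0) ≤
      ∑ u ∈ W, ∑ v ∈ Wᶜ, if C.cyc.Mem (u, v) then C.flux else 0 := by
  have hload : ∀ u v, 0 ≤ if C.cyc.Mem (u, v) then C.flux else 0 := fun _ _ => by
    split_ifs <;> simp [C.flux_nonneg]
  split_ifs with hvis
  · obtain ⟨⟨i, hi⟩, ⟨j, hj⟩⟩ := hvis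
    obtain ⟨k, hk, hk'⟩ := C.cyc.exists_edge_leaving W ⟨i, hIW hi⟩
      ⟨j, Finset.disjoint_left.mp hJW hj⟩
    calc C.flux = if C.cyc.Mem ((C.cyc.edge k).1, (C.cyc.edge k).2) then C.flux else 0 :=
          (if_pos ⟨k, rfl⟩).symm
      _ ≤ ∑ v ∈ Wᶜ, if C.cyc.Mem ((C.cyc.edge k).1, v) then C.flux else 0 :=
          Finset.single_le_sum (fun v _ => hload _ v) (Finset.mem_compl.mpr hk')
      _ ≤ _ := Finset.single_le_sum (f := fun u => ∑ v ∈ Wᶜ, _)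
          (fun u _ => Finset.sum_nonneg fun v _ => hload u v) hk
  · exact Finset.sum_nonneg fun u _ => Finset.sum_nonneg fun v _ => hload u v

theorem mflux_le_sum_edgeLoad (F : List (CycleFlow V)) {I J W : Finset V} (hIW : I ⊆ W)
    (hJW : Disjoint J W) : mflux F I J ≤ ∑ u ∈ W, ∑ v ∈ Wᶜ, edgeLoad F u v := by
  induction F with
  | nil => simp [mflux, edgeLoad]
  | cons C F ih =>
    simp only [mflux, edgeLoad, List.map_cons, List.sum_cons, Finset.sum_add_distrib] at ih ⊢
    exact add_le_add (C.flux_le_sum_load_leaving hIW hJW) ih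

theorem mflux_le_cutCapacity {c : V → V → ℝ} {F : List (CycleFlow V)} (hF : Feasible c F)
    {I J W : Finset V} (hIW : I ⊆ W) (hJW : Disjoint J W) : mflux F I J ≤ cutCapacity c W :=
  (mflux_le_sum_edgeLoad F hIW hJW).trans <|
    Finset.sum_le_sum fun u _ => Finset.sum_le_sum fun v _ => hF u v

end Cut

section Flow

variable {V : Type*} [Fintype V]

noncomputable def excess : (V → V → ℝ) →ₗ[ℝ] V → ℝ where
  toFun f v := ∑ u, f v u - ∑ u, f u v
  map_add' f g := by ext v; simp only [Pi.add_apply, Finset.sum_add_distrib]; ring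
  map_smul' a f := by ext v; simp [Finset.mul_sum, mul_sub]

theorem excess_apply (f : V → V → ℝ) (v : V) : excess f v = ∑ u, f v u - ∑ u, f u v := rfl

theorem excess_single [DecidableEq V] (a b : V) :
    excess (Pi.single a (Pi.single b 1)) = Pi.single a 1 - Pi.single b (1 : ℝ) := by
  ext v
  simp only [excess_apply, Pi.single_apply, ite_apply, Pi.zero_apply, Finset.sum_ite_eq',
    Finset.mem_univ, if_true, Pi.sub_apply]
  split_ifs <;> simp_all

theorem continuous_excess_apply (v : V) : Continuous fun f : V → V → ℝ => excess f v :=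
  (continuous_apply v).comp (LinearMap.continuous_of_finiteDimensional excess)

theorem excess_eq_zero_of_symm {h : V → V → ℝ} (hh : ∀ u v, h u v = h v u) : excess h = 0 := by
  ext v; simp [excess_apply, hh v]

theorem sum_excess_eq_sum_cut [DecidableEq V] {f : V → V → ℝ} {I J W : Finset V}
    (hcons : ∀ v, v ∉ I → v ∉ J → excess f v = 0) (hIW : I ⊆ W) (hJW : Disjoint J W) :
    ∑ v ∈ I, excess f v = ∑ u ∈ W, ∑ v ∈ Wᶜ, (f u v - f v u) := by
  have hWI : ∑ v ∈ I, excess f v = ∑ v ∈ W, excess f v :=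
    Finset.sum_subset hIW fun v hvW hvI => hcons v hvI (Finset.disjoint_right.mp hJW hvW)
  have hinner : ∑ u ∈ W, ∑ v ∈ W, f u v = ∑ u ∈ W, ∑ v ∈ W, f v u := Finset.sum_comm
  rw [hWI]
  simp only [excess_apply, ← Finset.sum_add_sum_compl W, Finset.sum_sub_distrib,
    Finset.sum_add_distrib] at hinner ⊢
  linarith

structure IsFlow (c : V → V → ℝ) (I J : Finset V) (f : V → V → ℝ) : Prop where
  nonneg : ∀ u v, 0 ≤ f u v
  le_cap : ∀ u v, f u v ≤ c u v
  excess_eq_zero : ∀ v, v ∉ I → v ∉ J → excess f v = 0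

theorem isClosed_setOf_isFlow (c : V → V → ℝ) (I J : Finset V) :
    IsClosed {f | IsFlow c I J f} := by
  have hS : {f | IsFlow c I J f} = (⋂ u, ⋂ v, {f : V → V → ℝ | 0 ≤ f u v ∧ f u v ≤ c u v}) ∩
      ⋂ v, ⋂ (_ : v ∉ I), ⋂ (_ : v ∉ J), {f | excess f v = 0} := by
    ext f
    simp only [Set.mem_ofPred_eq, Set.mem_inter_iff, Set.mem_iInter]
    exact ⟨fun h => ⟨fun u v => ⟨h.nonneg u v, h.le_cap u v⟩, h.excess_eq_zero⟩,
      fun h => ⟨fun u v => (h.1 u v).1, fun u v => (h.1 u v).2, h.2⟩⟩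
  rw [hS]
  refine .inter (isClosed_iInter fun u => isClosed_iInter fun v => .inter ?_ ?_)
    (isClosed_iInter fun v => isClosed_iInter fun _ => isClosed_iInter fun _ => ?_)
  · exact isClosed_le continuous_const (by fun_prop : Continuous fun f : V → V → ℝ => f u v)
  · exact isClosed_le (by fun_prop : Continuous fun f : V → V → ℝ => f u v) continuous_const
  · exact isClosed_eq (continuous_excess_apply v) continuous_const

theorem exists_isFlow_isMaxOn {c : V → V → ℝ} (hc : ∀ u v, 0 ≤ c u v) (I J : Finset V) :
    ∃ f, IsFlow c I J f ∧ ∀ g, IsFlow c I J g → ∑ v ∈ I, excess g v ≤ ∑ v ∈ I, excess f v := by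
  have hbox : IsCompact (Set.univ.pi fun u => Set.univ.pi fun v => Set.Icc 0 (c u v)) :=
    isCompact_univ_pi fun u => isCompact_univ_pi fun v => isCompact_Icc
  have hcompact : IsCompact {f | IsFlow c I J f} :=
    hbox.of_isClosed_subset (isClosed_setOf_isFlow c I J)
      fun f hf u _ v _ => ⟨hf.nonneg u v, hf.le_cap u v⟩
  have hzero : IsFlow c I J 0 := ⟨fun _ _ => le_rfl, hc, fun v _ _ => by simp⟩
  obtain ⟨f, hf, hmax⟩ := hcompact.exists_isMaxOn ⟨0, hzero⟩
    (continuous_finsetSum I fun v _ => continuous_excess_apply v).continuousOn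
  exact ⟨f, hf, fun g hg => hmax hg⟩

theorem IsFlow.exists_cancel {c f : V → V → ℝ} {I J : Finset V} (hsym : ∀ u v, c u v = c v u)
    (hf : IsFlow c I J f) :
    ∃ g, (∀ u v, 0 ≤ g u v) ∧ (∀ u v, g u v + g v u ≤ c u v) ∧ excess g = excess f := by
  refine ⟨f - fun u v => min (f u v) (f v u), fun u v => sub_nonneg.mpr (min_le_left _ _),
    fun u v => ?_, ?_⟩
  · simp only [Pi.sub_apply]
    rcases le_total (f u v) (f v u) with h | h
    · rw [min_eq_left h, min_eq_right h]
      linarith [hf.le_cap v u, hsym u v, hf.nonneg u v]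
    · rw [min_eq_right h, min_eq_left h]
      linarith [hf.le_cap u v, hf.nonneg v u]
  · rw [map_sub, excess_eq_zero_of_symm fun u v => min_comm _ _, sub_zero]

end Flow

section Augment

open Filter Topology

variable {V : Type*}

def Residual (c f : V → V → ℝ) (u v : V) : Prop :=
  f u v < c u v ∨ 0 < f v u

def IsAugmentingDirection (c f d : V → V → ℝ) : Prop :=
  ∀ u v, (0 < d u v → f u v < c u v) ∧ (d u v < 0 → 0 < f u v)

theorem IsAugmentingDirection.add {c f d e : V → V → ℝ} (hd : IsAugmentingDirection c f d)
    (he : IsAugmentingDirection c f e) : IsAugmentingDirection c f (d + e) := by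
  intro u v
  simp only [Pi.add_apply]
  constructor
  · intro h
    rcases lt_or_ge 0 (d u v) with hd' | hd'
    · exact (hd u v).1 hd'
    · exact (he u v).1 (by linarith)
  · intro h
    rcases lt_or_ge (d u v) 0 with hd' | hd'
    · exact (hd u v).2 hd'
    · exact (he u v).2 (by linarith)

theorem isAugmentingDirection_single [DecidableEq V] {c f : V → V → ℝ} {u w : V}
    (h : f u w < c u w) :
    IsAugmentingDirection c f (Pi.single u (Pi.single w 1)) := by
  intro x y
  simp only [Pi.single_apply, ite_apply, Pi.zero_apply]
  split_ifs <;> simp_all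

theorem isAugmentingDirection_neg_single [DecidableEq V] {c f : V → V → ℝ} {u w : V}
    (h : 0 < f w u) :
    IsAugmentingDirection c f (-Pi.single w (Pi.single u 1)) := by
  intro x y
  simp only [Pi.neg_apply, Pi.single_apply, ite_apply, Pi.zero_apply]
  split_ifs <;> simp_all

theorem IsAugmentingDirection.exists_pos [Finite V] {c f d : V → V → ℝ}
    (hd : IsAugmentingDirection c f d) (hf0 : ∀ u v, 0 ≤ f u v) (hfc : ∀ u v, f u v ≤ c u v) :
    ∃ ε > 0, ∀ u v, 0 ≤ f u v + ε * d u v ∧ f u v + ε * d u v ≤ c u v := by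
  have hε : ∀ᶠ ε in 𝓝[>] (0 : ℝ), 0 < ε := self_mem_nhdsWithin
  have hedge : ∀ u v, ∀ᶠ ε in 𝓝[>] (0 : ℝ),
      0 ≤ f u v + ε * d u v ∧ f u v + ε * d u v ≤ c u v := by
    intro u v
    have hlim : Tendsto (fun ε => f u v + ε * d u v) (𝓝[>] 0) (𝓝 (f u v)) := by
      have hcont : Continuous fun ε : ℝ => f u v + ε * d u v := by fun_prop
      simpa using (hcont.tendsto 0).mono_left nhdsWithin_le_nhds
    rcases lt_trichotomy (d u v) 0 with hneg | hzero | hpos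
    · filter_upwards [hε, hlim.eventually (lt_mem_nhds ((hd u v).2 hneg))] with ε hε hlow
      exact ⟨hlow.le, by nlinarith [hfc u v]⟩
    · exact Eventually.of_forall fun ε => by simp [hzero, hf0 u v, hfc u v]
    · filter_upwards [hε, hlim.eventually (gt_mem_nhds ((hd u v).1 hpos))] with ε hε hup
      exact ⟨by nlinarith [hf0 u v], hup.le⟩
  exact (hε.and (eventually_all.2 fun u => eventually_all.2 (hedge u))).exists

theorem exists_isAugmentingDirection [Fintype V] [DecidableEq V] {c f : V → V → ℝ} {s t : V}
    (h : Relation.ReflTransGen (Residual c f) s t) :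
    ∃ d, IsAugmentingDirection c f d ∧ excess d = Pi.single s 1 - Pi.single t 1 := by
  induction h with
  | refl => exact ⟨0, fun u v => by simp, by simp⟩
  | @tail u w _ hr ih =>
    obtain ⟨d, hd, hexcess⟩ := ih
    obtain ⟨e, he, hexcess'⟩ : ∃ e, IsAugmentingDirection c f e ∧
        excess e = Pi.single u 1 - Pi.single w 1 := by
      rcases hr with hlt | hpos
      · exact ⟨_, isAugmentingDirection_single hlt, excess_single u w⟩
      · exact ⟨_, isAugmentingDirection_neg_single hpos, by rw [map_neg, excess_single]; abel⟩
    exact ⟨d + e, hd.add he, by rw [map_add, hexcess, hexcess']; abel⟩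

theorem IsFlow.exists_sum_excess_lt [Fintype V] [DecidableEq V] {c f : V → V → ℝ}
    {I J : Finset V} (hf : IsFlow c I J f) {s t : V} (hs : s ∈ I) (ht : t ∈ J) (htI : t ∉ I)
    (h : Relation.ReflTransGen (Residual c f) s t) :
    ∃ g, IsFlow c I J g ∧ ∑ v ∈ I, excess f v < ∑ v ∈ I, excess g v := by
  obtain ⟨d, hd, hexcess⟩ := exists_isAugmentingDirection h
  obtain ⟨ε, hε, hbounds⟩ := hd.exists_pos hf.nonneg hf.le_cap
  have hexcess' : ∀ v, excess (f + ε • d) v =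
      excess f v + ε * (Pi.single s 1 - Pi.single t 1 : V → ℝ) v :=
    fun v => by rw [map_add, map_smul, hexcess]; rfl
  refine ⟨f + ε • d,
    ⟨fun u v => (hbounds u v).1, fun u v => (hbounds u v).2, fun v hvI hvJ => ?_⟩, ?_⟩
  · have hvs : v ≠ s := fun h => hvI (h ▸ hs)
    have hvt : v ≠ t := fun h => hvJ (h ▸ ht)
    simp [hexcess', hf.excess_eq_zero v hvI hvJ, hvs, hvt]
  · simp only [hexcess', Finset.sum_add_distrib, ← Finset.mul_sum, Pi.sub_apply,
      Finset.sum_sub_distrib, Finset.sum_pi_single', hs, htI, if_true, if_false]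
    linarith

theorem IsFlow.exists_cutCapacity_eq [Fintype V] [DecidableEq V] {c f : V → V → ℝ}
    {I J : Finset V} (hIJ : Disjoint I J) (hf : IsFlow c I J f)
    (hmax : ∀ g, IsFlow c I J g → ∑ v ∈ I, excess g v ≤ ∑ v ∈ I, excess f v) :
    ∃ W, I ⊆ W ∧ Disjoint J W ∧ cutCapacity c W = ∑ v ∈ I, excess f v := by
  have hnot : ∀ s ∈ I, ∀ t ∈ J, ¬ Relation.ReflTransGen (Residual c f) s t := by
    intro s hs t ht hst
    obtain ⟨g, hg, hlt⟩ := hf.exists_sum_excess_lt hs ht (Finset.disjoint_right.mp hIJ ht) hst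
    exact (hmax g hg).not_gt hlt
  obtain ⟨W, hIW, hJW, hclosed⟩ := exists_closed_of_not_reflTransGen _ hnot
  refine ⟨W, hIW, hJW, ?_⟩
  rw [sum_excess_eq_sum_cut hf.excess_eq_zero hIW hJW, cutCapacity]
  refine Finset.sum_congr rfl fun u hu => Finset.sum_congr rfl fun v hv => ?_
  have hsat := hclosed u hu v (Finset.mem_compl.mp hv)
  simp only [Residual, not_or, not_lt] at hsat
  linarith [hf.le_cap u v, hf.nonneg v u]

end Augment

structure SimplePath {V : Type*} (r : V → V → Prop) (s t : V) where
  length : ℕ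
  vertex : ℕ → V
  vertex_zero : vertex 0 = s
  vertex_length : vertex length = t
  injOn : Set.InjOn vertex (Set.Iic length)
  rel : ∀ i < length, r (vertex i) (vertex (i + 1))

namespace SimplePath

variable {V : Type*} {r : V → V → Prop} {s t : V}

theorem nonempty_of_reflTransGen (h : Relation.ReflTransGen r s t) :
    Nonempty (SimplePath r s t) := by
  induction h with
  | refl =>
    exact ⟨⟨0, fun _ => s, rfl, rfl, fun i hi j hj _ => by simp_all,
      fun i hi => absurd hi i.not_lt_zero⟩⟩
  | @tail u w _ hr ih =>
    obtain ⟨p⟩ := ih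
    by_cases hw : ∃ j ≤ p.length, p.vertex j = w
    · obtain ⟨j, hj, hjw⟩ := hw
      exact ⟨⟨j, p.vertex, p.vertex_zero, hjw, p.injOn.mono (Set.Iic_subset_Iic.mpr hj),
        fun i hi => p.rel i (by omega)⟩⟩
    · push Not at hw
      refine ⟨⟨p.length + 1, fun i => if i ≤ p.length then p.vertex i else w,
        by simp [p.vertex_zero], by simp, ?_, ?_⟩⟩
      · intro i hi j hj hij
        simp only [Set.mem_Iic] at hi hj
        dsimp only at hij
        split_ifs at hij with hi' hj' hj'
        · exact p.injOn hi' hj' hij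
        · exact absurd hij (hw i hi')
        · exact absurd hij.symm (hw j hj')
        · omega
      · intro i hi
        by_cases hil : i < p.length
        · simpa [hil.le, Nat.succ_le_of_lt hil] using p.rel i hil
        · obtain rfl : i = p.length := by omega
          simpa [p.vertex_length] using hr

def IsStep (p : SimplePath r s t) (u w : V) : Prop :=
  ∃ i < p.length, p.vertex i = u ∧ p.vertex (i + 1) = w

noncomputable def indicator [DecidableEq V] (p : SimplePath r s t) : V → V → ℝ :=
  ∑ i ∈ Finset.range p.length, Pi.single (p.vertex i) (Pi.single (p.vertex (i + 1)) 1)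

theorem indicator_apply [DecidableEq V] (p : SimplePath r s t) (u w : V) :
    p.indicator u w = if p.IsStep u w then 1 else 0 := by
  have hsum : p.indicator u w =
      ∑ i ∈ Finset.range p.length, if p.vertex i = u ∧ p.vertex (i + 1) = w then 1 else 0 := by
    simp only [indicator, Finset.sum_apply, Pi.single_apply, ite_apply, Pi.zero_apply]
    refine Finset.sum_congr rfl fun i _ => ?_
    split_ifs <;> simp_all
  rw [hsum]
  split_ifs with hstep
  · obtain ⟨i, hi, hiu, hiw⟩ := hstep
    refine (Finset.sum_eq_single_of_mem i (Finset.mem_range.mpr hi) fun j hj hji => if_neg ?_).trans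
      (if_pos ⟨hiu, hiw⟩)
    rintro ⟨hju, -⟩
    exact hji (p.injOn (by simp at hj ⊢; omega) (by simp; omega) (hju.trans hiu.symm))
  · exact Finset.sum_eq_zero fun i hi => if_neg fun h => hstep ⟨i, Finset.mem_range.mp hi, h⟩

theorem excess_indicator [Fintype V] [DecidableEq V] (p : SimplePath r s t) :
    excess p.indicator = Pi.single s 1 - Pi.single t 1 := by
  simp only [indicator, map_sum, excess_single]
  exact (Finset.sum_range_sub' (fun i => (Pi.single (p.vertex i) 1 : V → ℝ)) p.length).trans
    (by rw [p.vertex_zero, p.vertex_length])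

def closedWalk (p : SimplePath r s t) (j : ℕ) : V :=
  p.vertex (if j ≤ p.length then j else 2 * p.length - j)

def toEdgeCycle (p : SimplePath r s t) (hp : 0 < p.length) : EdgeCycle V where
  n := 2 * p.length
  npos := by omega
  edge j := (p.closedWalk j, p.closedWalk (j + 1))
  inj a b hab := by
    have ha := a.isLt
    have hb := b.isLt
    simp only [closedWalk, Prod.mk.injEq] at hab
    have h₁ := p.injOn (by simp; split_ifs <;> omega) (by simp; split_ifs <;> omega) hab.1
    have h₂ := p.injOn (by simp; split_ifs <;> omega) (by simp; split_ifs <;> omega) hab.2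
    ext
    split_ifs at h₁ h₂ <;> omega
  chain j := by
    have hj := j.isLt
    rcases Nat.lt_or_ge (j + 1) (2 * p.length) with h | h
    · simp [Nat.mod_eq_of_lt h]
    · have hj' : j.val + 1 = 2 * p.length := by omega
      simp [hj', closedWalk, if_neg (show ¬2 * p.length ≤ p.length by omega)]

theorem isStep_of_mem_toEdgeCycle {p : SimplePath r s t} {hp : 0 < p.length} {u w : V}
    (h : (p.toEdgeCycle hp).Mem (u, w)) : p.IsStep u w ∨ p.IsStep w u := by
  obtain ⟨j, hj⟩ := h
  have hjlt : j.val < 2 * p.length := j.isLt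
  simp only [toEdgeCycle, closedWalk, Prod.mk.injEq] at hj
  by_cases hjl : j.val < p.length
  · left
    refine ⟨j, hjl, ?_, ?_⟩
    · simpa [hjl.le] using hj.1
    · simpa [Nat.succ_le_of_lt hjl] using hj.2
  · right
    refine ⟨2 * p.length - j - 1, by omega, ?_, ?_⟩
    · convert hj.2 using 2; split_ifs <;> omega
    · convert hj.1 using 2; split_ifs <;> omega

theorem visits_toEdgeCycle (p : SimplePath r s t) (hp : 0 < p.length) {S : Finset V} {i : ℕ}
    (hi : i ≤ p.length) (hS : p.vertex i ∈ S) : (p.toEdgeCycle hp).Visits S := by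
  refine ⟨⟨if i = 0 then 2 * p.length - 1 else i - 1,
    show _ < 2 * p.length by split_ifs <;> omega⟩, ?_⟩
  convert hS using 2
  simp only [toEdgeCycle, closedWalk]
  split_ifs <;> first | rfl | (congr 1; omega)

end SimplePath

section Decomposition

variable {V : Type*} [Fintype V] [DecidableEq V]

theorem SimplePath.exists_peel {g : V → V → ℝ} {s t : V}
    (p : SimplePath (fun u v => 0 < g u v) s t) (hp : 0 < p.length) (hg : ∀ u v, 0 ≤ g u v) :
    ∃ ε > 0, ∃ g' : V → V → ℝ, (∀ u v, 0 ≤ g' u v) ∧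
      (Function.support (Function.uncurry g')).ncard <
        (Function.support (Function.uncurry g)).ncard ∧
      excess g' = excess g - ε • (Pi.single s 1 - Pi.single t 1) ∧
      ∀ u w, (if (p.toEdgeCycle hp).Mem (u, w) then ε else 0) + (g' u w + g' w u) ≤
        g u w + g w u := by
  obtain ⟨i₀, hi₀, hmin⟩ := Finset.exists_min_image (Finset.range p.length)
    (fun i => g (p.vertex i) (p.vertex (i + 1))) ⟨0, Finset.mem_range.mpr hp⟩
  set ε := g (p.vertex i₀) (p.vertex (i₀ + 1))
  have hε : 0 < ε := p.rel i₀ (Finset.mem_range.mp hi₀)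
  have hg' : ∀ u w, (g - ε • p.indicator) u w = g u w - ε * if p.IsStep u w then 1 else 0 :=
    fun u w => by simp [p.indicator_apply]
  have hnonneg : ∀ u w, 0 ≤ (g - ε • p.indicator) u w := by
    intro u w
    rw [hg']
    split_ifs with hstep
    · obtain ⟨i, hi, rfl, rfl⟩ := hstep
      linarith [hmin i (Finset.mem_range.mpr hi)]
    · linarith [hg u w]
  refine ⟨ε, hε, g - ε • p.indicator, hnonneg, ?_, ?_, fun u w => ?_⟩
  · refine Set.ncard_lt_ncard (Set.ssubset_iff_of_subset (fun q hq => ?_) |>.mpr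
      ⟨(p.vertex i₀, p.vertex (i₀ + 1)), hε.ne', ?_⟩) (Set.toFinite _)
    · have hq' : 0 < (g - ε • p.indicator) q.1 q.2 := (hnonneg q.1 q.2).lt_of_ne' hq
      rw [hg'] at hq'
      have : 0 ≤ ε * if p.IsStep q.1 q.2 then (1 : ℝ) else 0 := by positivity
      exact (show 0 < g q.1 q.2 by linarith).ne'
    · have hstep₀ : p.IsStep (p.vertex i₀) (p.vertex (i₀ + 1)) :=
        ⟨i₀, Finset.mem_range.mp hi₀, rfl, rfl⟩
      simp [hg', hstep₀, ε]
  · rw [map_sub, map_smul, p.excess_indicator]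
  · have hmem := @SimplePath.isStep_of_mem_toEdgeCycle _ _ _ _ p hp u w
    rw [hg', hg']
    split_ifs <;> first | linarith | tauto

theorem sum_excess_nonpos_of_not_reflTransGen {I J : Finset V} {g : V → V → ℝ}
    (hg : ∀ u v, 0 ≤ g u v) (hcons : ∀ v, v ∉ I → v ∉ J → excess g v = 0)
    (h : ∀ s ∈ I, ∀ t ∈ J, ¬ Relation.ReflTransGen (fun u v => 0 < g u v) s t) :
    ∑ v ∈ I, excess g v ≤ 0 := by
  obtain ⟨W, hIW, hJW, hclosed⟩ := exists_closed_of_not_reflTransGen _ h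
  rw [sum_excess_eq_sum_cut hcons hIW hJW]
  refine Finset.sum_nonpos fun u hu => Finset.sum_nonpos fun v hv => ?_
  linarith [hclosed u hu v (Finset.mem_compl.mp hv), hg v u]

theorem exists_cycleFlows_of_excess {I J : Finset V} (hIJ : Disjoint I J) (g : V → V → ℝ)
    (hg : ∀ u v, 0 ≤ g u v) (hcons : ∀ v, v ∉ I → v ∉ J → excess g v = 0) :
    ∃ F : List (CycleFlow V), (∀ u v, edgeLoad F u v ≤ g u v + g v u) ∧
      ∑ v ∈ I, excess g v ≤ mflux F I J := by
  induction hn : (Function.support (Function.uncurry g)).ncard using Nat.strong_induction_on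
    generalizing g with
  | _ n ih =>
  by_cases hreach : ∃ s ∈ I, ∃ t ∈ J, Relation.ReflTransGen (fun u v => 0 < g u v) s t
  · obtain ⟨s, hs, t, ht, hst⟩ := hreach
    obtain ⟨p⟩ := SimplePath.nonempty_of_reflTransGen hst
    have htI : t ∉ I := Finset.disjoint_right.mp hIJ ht
    have hp : 0 < p.length := Nat.pos_of_ne_zero fun h =>
      htI (by rw [← p.vertex_length, h, p.vertex_zero]; exact hs)
    obtain ⟨ε, hε, g', hg', hlt, hexcess, hload⟩ := p.exists_peel hp hg
    have hexcess' : ∀ v,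
        excess g' v = excess g v - ε * (Pi.single s 1 - Pi.single t 1 : V → ℝ) v :=
      fun v => by rw [hexcess]; rfl
    have hcons' : ∀ v, v ∉ I → v ∉ J → excess g' v = 0 := fun v hvI hvJ => by
      have hvs : v ≠ s := fun h => hvI (h ▸ hs)
      have hvt : v ≠ t := fun h => hvJ (h ▸ ht)
      simp [hexcess', hcons v hvI hvJ, hvs, hvt]
    obtain ⟨F, hF, hval⟩ := ih _ (hn ▸ hlt) g' hg' hcons' rfl
    refine ⟨⟨p.toEdgeCycle hp, ε, hε.le⟩ :: F, fun u w => ?_, ?_⟩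
    · simp only [edgeLoad, List.map_cons, List.sum_cons] at hF ⊢
      linarith [hF u w, hload u w]
    · have hvisits : (p.toEdgeCycle hp).Visits I ∧ (p.toEdgeCycle hp).Visits J :=
        ⟨p.visits_toEdgeCycle hp (Nat.zero_le _) (by rwa [p.vertex_zero]),
          p.visits_toEdgeCycle hp le_rfl (by rwa [p.vertex_length])⟩
      simp only [mflux, List.map_cons, List.sum_cons, if_pos hvisits] at hval ⊢
      simp only [hexcess', Finset.sum_sub_distrib, ← Finset.mul_sum, Pi.sub_apply,
        Finset.sum_pi_single', hs, htI, if_true, if_false] at hval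
      linarith
  · push Not at hreach
    refine ⟨[], fun u v => by simp [edgeLoad, hg u v, hg v u, add_nonneg], ?_⟩
    simpa [mflux] using sum_excess_nonpos_of_not_reflTransGen hg hcons hreach

end Decomposition

theorem isGreatest_mflux {V : Type*} [Fintype V] [DecidableEq V] {c : V → V → ℝ}
    (hc : ∀ u v, 0 ≤ c u v) (hsym : ∀ u v, c u v = c v u) {I J : Finset V} (hIJ : Disjoint I J) :
    ∃ W, I ⊆ W ∧ Disjoint J W ∧
      IsGreatest {x | ∃ F, Feasible c F ∧ mflux F I J = x} (cutCapacity c W) := by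
  obtain ⟨f, hf, hmax⟩ := exists_isFlow_isMaxOn hc I J
  obtain ⟨W, hIW, hJW, hcut⟩ := hf.exists_cutCapacity_eq hIJ hmax
  obtain ⟨g, hg, hgc, hexcess⟩ := hf.exists_cancel hsym
  obtain ⟨F, hFg, hFval⟩ := exists_cycleFlows_of_excess hIJ g hg (hexcess ▸ hf.excess_eq_zero)
  have hF : Feasible c F := fun u v => (hFg u v).trans (hgc u v)
  refine ⟨W, hIW, hJW, ⟨F, hF, (mflux_le_cutCapacity hF hIW hJW).antisymm ?_⟩, ?_⟩
  · rwa [hcut, ← hexcess]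
  · rintro _ ⟨F', hF', rfl⟩
    exact mflux_le_cutCapacity hF' hIW hJW

theorem Finset.inter_eq_iff_subset_disjoint_sdiff {V : Type*} [DecidableEq V] {B I W : Finset V}
    (hI : I ⊆ B) : W ∩ B = I ↔ I ⊆ W ∧ Disjoint (B \ I) W := by
  simp only [Finset.ext_iff, Finset.subset_iff, Finset.disjoint_left, Finset.mem_inter,
    Finset.mem_sdiff]
  grind

/-- On a symmetric directed network (the directed symmetrization of an undirected
weighted graph), the cycle-flow entropy of `I` equals the minimum edge cut
separating `I` from `∂V ∖ I`, and the minimum is attained. -/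
theorem stmt16 {V : Type*} [Fintype V] [DecidableEq V] (c : V → V → ℝ)
    (hc : ∀ u v, 0 ≤ c u v) (hsym : ∀ u v, c u v = c v u)
    (bdry I : Finset V) (hI : I ⊆ bdry) :
    IsLeast { x | ∃ W : Finset V, W ∩ bdry = I ∧ (∑ u ∈ W, ∑ v ∈ Wᶜ, c u v) = x }
      (entropy c bdry I) := by
  obtain ⟨W, hIW, hJW, hmax⟩ :=
    isGreatest_mflux hc hsym (Finset.disjoint_sdiff (s := I) (t := bdry))
  have hent : entropy c bdry I = cutCapacity c W := by
    unfold entropy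
    -- `entropy` forms `bdry \ I` with the classical `DecidableEq` instance, not with the binder.
    exact (congrArg sSup (by congr!)).trans hmax.csSup_eq
  have hadm := fun W' => Finset.inter_eq_iff_subset_disjoint_sdiff (W := W') hI
  rw [hent]
  refine ⟨⟨W, (hadm W).2 ⟨hIW, hJW⟩, rfl⟩, ?_⟩
  rintro _ ⟨W', hW', rfl⟩
  obtain ⟨F, hF, hFW⟩ := hmax.1
  rw [← hFW]
  exact mflux_le_cutCapacity hF ((hadm W').1 hW').1 ((hadm W').1 hW').2
end
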